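/- arXiv:2102.11381 — 5 statements merged into one kernel-verified Lean document; each statement's English description precedes it below -/
import Mathlib

section
/- Let A < B be real numbers, let f : ℝ → ℝ be strictly decreasing, and let x_f ∈ ℝ satisfy f(x_f) = 0. Then f(x) ∈ N_{[A,B]}(x) if and only if x = proj_{[A,B]}(x_f). -/
open Set

/-- Normal cone of the closed interval `[A,B]` at `x`. -/
noncomputable def normalCone (A B x : ℝ) : Set ℝ :=
  if x = B then Set.Ici 0
  else if x = A then Set.Iic 0
  else if A < x ∧ x < B then {0} else (∅ : Set ℝ)

/-- Normal cone of `[0,∞)` at `x`. -/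
noncomputable def normalConeIci (x : ℝ) : Set ℝ :=
  if x = 0 then Set.Iic 0
  else if 0 < x then {0} else (∅ : Set ℝ)

/-- Normal cone of `(-∞,M]` at `P`. -/
noncomputable def normalConeIic (M P : ℝ) : Set ℝ :=
  if P = M then Set.Ici 0
  else if P < M then {0} else (∅ : Set ℝ)

/-- Generalized set-valued sign function. -/
noncomputable def gsgn (a y b : ℝ) : Set ℝ :=
  if 0 < y then {b}
  else if y < 0 then {a}
  else Set.Icc (min a b) (max a b)

/-- Projection onto `[A,B]`. -/
noncomputable def proj (A B x : ℝ) : ℝ := max A (min B x)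

/-- Signed square. -/
noncomputable def Ssq (x : ℝ) : ℝ := Real.sign x * x ^ 2

/-- Signed square root. -/
noncomputable def Rsq (x : ℝ) : ℝ := Real.sign x * Real.sqrt |x|

/-- The function `Φ_A` of the paper. -/
noncomputable def PhiA (b c a : ℝ) : ℝ :=
  -Real.sign c * ((Real.sqrt (a ^ 2 * b ^ 2 + 4 * a * |c|) - a * b) / 2)

/-! Both sides amount to `x ∈ [A, B]` plus two one-sided conditions: away from `B` one needs
`f x ≤ 0`, resp. `xf ≤ x`, and away from `A` one needs `0 ≤ f x`, resp. `x ≤ xf`. As `f` is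
strictly decreasing with `f xf = 0`, these conditions agree. -/

theorem mem_normalCone_iff {A B x v : ℝ} (hAB : A < B) :
    v ∈ normalCone A B x ↔ x ∈ Icc A B ∧ (x < B → v ≤ 0) ∧ (A < x → 0 ≤ v) := by
  unfold normalCone
  split_ifs <;> simp only [mem_Ici, mem_Iic, mem_singleton_iff, mem_empty_iff_false, mem_Icc] <;>
    grind

theorem eq_proj_iff {A B x y : ℝ} (hAB : A ≤ B) :
    x = proj A B y ↔ x ∈ Icc A B ∧ (x < B → y ≤ x) ∧ (A < x → x ≤ y) := by
  simp only [proj, mem_Icc, max_def, min_def]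
  grind

theorem stmt_3 (A B : ℝ) (hAB : A < B) (f : ℝ → ℝ) (hf : StrictAnti f)
    (xf : ℝ) (hxf : f xf = 0) (x : ℝ) :
    f x ∈ normalCone A B x ↔ x = proj A B xf := by
  have hnonpos : f x ≤ 0 ↔ xf ≤ x := by rw [← hxf, hf.le_iff_ge]
  have hnonneg : 0 ≤ f x ↔ x ≤ xf := by rw [← hxf, hf.le_iff_ge]
  rw [mem_normalCone_iff hAB, eq_proj_iff hAB.le, hnonpos, hnonneg]
end

section
/- Let f, g : ℝ → ℝ be strictly decreasing functions with g(0) ≤ f(0), let b ∈ ℝ, and let x_f, x_g satisfy b = f(x_f) and b = g(x_g). Then b ∈ gsgn(f(x), x, g(x)) if and only if x equals x_f when b > f(0), x equals x_g when b < g(0), and x = 0 when g(0) ≤ b ≤ f(0). -/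
open Set

/-! For strictly decreasing `f`, `g` with `g 0 ≤ f 0`, the values of `x ↦ gsgn (f x) x (g x)` lie in
`(f 0, ∞)` for `x < 0`, in `[g 0, f 0]` for `x = 0` and in `(-∞, g 0)` for `x > 0`. So `b` alone
determines the sign of a solution `x`, and then injectivity of `f` (for `x < 0`) or of `g`
(for `x > 0`) identifies `x` with `xf` or `xg`. -/

section gsgn

variable {a b y : ℝ}

theorem gsgn_of_pos (hy : 0 < y) : gsgn a y b = {b} := if_pos hy

theorem gsgn_of_neg (hy : y < 0) : gsgn a y b = {a} := by
  rw [gsgn, if_neg hy.not_gt, if_pos hy]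

theorem gsgn_zero : gsgn a 0 b = uIcc a b := by
  rw [gsgn, if_neg (lt_irrefl 0), if_neg (lt_irrefl 0)]
  rfl

end gsgn

section sign

variable {f g : ℝ → ℝ} {b x : ℝ}

theorem neg_iff_of_mem_gsgn (hf : StrictAnti f) (hg : StrictAnti g) (hfg : g 0 ≤ f 0)
    (h : b ∈ gsgn (f x) x (g x)) : x < 0 ↔ f 0 < b := by
  rcases lt_trichotomy x 0 with hx | rfl | hx
  · rw [gsgn_of_neg hx, mem_singleton_iff] at h
    exact iff_of_true hx (h ▸ hf hx)
  · rw [gsgn_zero, uIcc_of_ge hfg] at h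
    simpa using h.2
  · rw [gsgn_of_pos hx, mem_singleton_iff] at h
    simpa [h, hx.not_gt] using hfg.trans' (hg hx).le

theorem pos_iff_of_mem_gsgn (hf : StrictAnti f) (hg : StrictAnti g) (hfg : g 0 ≤ f 0)
    (h : b ∈ gsgn (f x) x (g x)) : 0 < x ↔ b < g 0 := by
  rcases lt_trichotomy x 0 with hx | rfl | hx
  · rw [gsgn_of_neg hx, mem_singleton_iff] at h
    simpa [h, hx.not_gt] using hfg.trans (hf hx).le
  · rw [gsgn_zero, uIcc_of_ge hfg] at h
    simpa using h.1
  · rw [gsgn_of_pos hx, mem_singleton_iff] at h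
    exact iff_of_true hx (h ▸ hg hx)

end sign

theorem stmt_6 (f g : ℝ → ℝ) (hf : StrictAnti f) (hg : StrictAnti g)
    (hfg : g 0 ≤ f 0) (b xf xg : ℝ) (hxf : b = f xf) (hxg : b = g xg) (x : ℝ) :
    b ∈ gsgn (f x) x (g x) ↔
      x = (if f 0 < b then xf else if b < g 0 then xg else 0) := by
  split_ifs with hfb hbg
  · have hxf_neg : xf < 0 := by rwa [hxf, hf.lt_iff_gt] at hfb
    refine ⟨fun h => ?_, fun hx => ?_⟩
    · have hx : x < 0 := (neg_iff_of_mem_gsgn hf hg hfg h).2 hfb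
      rw [gsgn_of_neg hx, mem_singleton_iff, hxf] at h
      exact hf.injective h.symm
    · rw [hx, gsgn_of_neg hxf_neg]
      exact hxf
  · have hxg_pos : 0 < xg := by rwa [hxg, hg.lt_iff_gt] at hbg
    refine ⟨fun h => ?_, fun hx => ?_⟩
    · have hx : 0 < x := (pos_iff_of_mem_gsgn hf hg hfg h).2 hbg
      rw [gsgn_of_pos hx, mem_singleton_iff, hxg] at h
      exact hg.injective h.symm
    · rw [hx, gsgn_of_pos hxg_pos]
      exact hxg
  · refine ⟨fun h => ?_, fun hx => ?_⟩
    · exact le_antisymm (not_lt.1 (hbg ∘ (pos_iff_of_mem_gsgn hf hg hfg h).1))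
        (not_lt.1 (hfb ∘ (neg_iff_of_mem_gsgn hf hg hfg h).1))
    · rw [hx, gsgn_zero, uIcc_of_ge hfg]
      exact ⟨not_lt.1 hbg, not_lt.1 hfb⟩
end

section
/- Let a > 0 and b > 0, and define Φ_A(b,c,a) = −sgn(c)·(√(a²b² + 4a|c|) − ab)/2. Then for all c, x ∈ ℝ: x = Φ_A(b,c,a) if and only if S(x)/a + bx + c = 0, where S(x) = sgn(x)·x². -/
open Set

lemma ssq_eq (x : ℝ) : Ssq x = x * |x| := by
  unfold Ssq
  rcases lt_trichotomy x 0 with h | h | h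
  · rw [Real.sign_of_neg h, abs_of_neg h]; ring
  · simp [h]
  · rw [Real.sign_of_pos h, abs_of_pos h]; ring

lemma f_strictMono (a b : ℝ) (ha : 0 < a) (hb : 0 < b) :
    StrictMono (fun x : ℝ => Ssq x / a + b * x) := by
  intro x y hxy
  simp only [ssq_eq]
  have h1 : x * |x| ≤ y * |y| := by
    rcases le_or_gt 0 x with hx | hx
    · rw [abs_of_nonneg hx, abs_of_nonneg (le_trans hx hxy.le)]
      nlinarith
    · rcases le_or_gt 0 y with hy | hy
      · rw [abs_of_neg hx, abs_of_nonneg hy]; nlinarith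
      · rw [abs_of_neg hx, abs_of_neg hy]; nlinarith
  have h2 : b * x < b * y := by nlinarith
  have h3 : x * |x| / a ≤ y * |y| / a := by gcongr
  linarith

lemma phiA_solves (a b : ℝ) (ha : 0 < a) (hb : 0 < b) (c : ℝ) :
    Ssq (PhiA b c a) / a + b * PhiA b c a + c = 0 := by
  rcases lt_trichotomy c 0 with hc | hc | hc
  · have habs : |c| = -c := abs_of_neg hc
    set s := Real.sqrt (a ^ 2 * b ^ 2 + 4 * a * |c|) with hs
    have hD : 0 ≤ a ^ 2 * b ^ 2 + 4 * a * |c| := by positivity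
    have hs2 : s ^ 2 = a ^ 2 * b ^ 2 + 4 * a * |c| := Real.sq_sqrt hD
    have hsnn : 0 ≤ s := Real.sqrt_nonneg _
    have hPhi : PhiA b c a = (s - a * b) / 2 := by
      rw [PhiA, Real.sign_of_neg hc]; ring
    have hpos : 0 < PhiA b c a := by
      rw [hPhi]
      have : a * b < s := by nlinarith [abs_pos.mpr hc.ne]
      linarith
    rw [Ssq, Real.sign_of_pos hpos, hPhi]
    field_simp
    nlinarith [hs2]
  · simp [PhiA, Ssq, hc]
  · have habs : |c| = c := abs_of_pos hc
    set s := Real.sqrt (a ^ 2 * b ^ 2 + 4 * a * |c|) with hs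
    have hD : 0 ≤ a ^ 2 * b ^ 2 + 4 * a * |c| := by positivity
    have hs2 : s ^ 2 = a ^ 2 * b ^ 2 + 4 * a * |c| := Real.sq_sqrt hD
    have hsnn : 0 ≤ s := Real.sqrt_nonneg _
    have hPhi : PhiA b c a = -((s - a * b) / 2) := by
      rw [PhiA, Real.sign_of_pos hc]; ring
    have hneg : PhiA b c a < 0 := by
      rw [hPhi]
      have : a * b < s := by nlinarith [abs_pos.mpr hc.ne']
      linarith
    rw [Ssq, Real.sign_of_neg hneg, hPhi]
    field_simp
    nlinarith [hs2]

theorem stmt_9 (a b : ℝ) (ha : 0 < a) (hb : 0 < b) (c x : ℝ) :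
    x = PhiA b c a ↔ Ssq x / a + b * x + c = 0 := by
  constructor
  · rintro rfl
    exact phiA_solves a b ha hb c
  · intro h
    have h2 := phiA_solves a b ha hb c
    have : Ssq x / a + b * x = Ssq (PhiA b c a) / a + b * PhiA b c a := by linarith
    exact (f_strictMono a b ha hb).injective this
end

section
/- Let U_b > 0, P_M > 0, P_c ∈ ℝ, and Q ≥ 0. Then the condition Q ∈ U_b·R(P) + N_{(−∞, min(P_c,P_M)]}(P) holds if and only if P = min(P_c, P_M, S(Q/U_b)), where R(x) = sgn(x)√|x| and S(x) = sgn(x)x². -/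
open Set

lemma ssq_strictMono : StrictMono Ssq := by
  intro x y h
  rw [ssq_eq, ssq_eq]
  rcases le_or_gt 0 x with hx|hx
  · rw [abs_of_nonneg hx, abs_of_nonneg (hx.trans h.le)]
    nlinarith
  · rcases le_or_gt 0 y with hy|hy
    · rw [abs_of_neg hx, abs_of_nonneg hy]; nlinarith
    · rw [abs_of_neg hx, abs_of_neg hy]; nlinarith

lemma ssq_rsq (x : ℝ) : Ssq (Rsq x) = x := by
  unfold Rsq
  rcases lt_trichotomy x 0 with h|h|h
  · rw [Real.sign_of_neg h, ssq_eq, abs_of_neg h]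
    have h1 : (0:ℝ) ≤ Real.sqrt (-x) := Real.sqrt_nonneg _
    have h2 : Real.sqrt (-x) * Real.sqrt (-x) = -x := Real.mul_self_sqrt (by linarith)
    rw [abs_of_nonpos (by nlinarith)]
    nlinarith
  · simp [h, Ssq]
  · rw [Real.sign_of_pos h, abs_of_pos h]
    have h1 : (0:ℝ) ≤ Real.sqrt x := Real.sqrt_nonneg _
    have h2 : Real.sqrt x * Real.sqrt x = x := Real.mul_self_sqrt h.le
    rw [ssq_eq, abs_of_nonneg (by nlinarith)]
    nlinarith

lemma rsq_ssq (x : ℝ) : Rsq (Ssq x) = x :=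
  ssq_strictMono.injective (by rw [ssq_rsq])

theorem stmt_13 (Ub PM Pc Q : ℝ) (hUb : 0 < Ub) (hPM : 0 < PM) (hQ : 0 ≤ Q) (P : ℝ) :
    Q - Ub * Rsq P ∈ normalConeIic (min Pc PM) P ↔
      P = min Pc (min PM (Ssq (Q / Ub))) := by
  have hR : Rsq P = Q / Ub ↔ P = Ssq (Q / Ub) :=
    ⟨fun h => by rw [← h, ssq_rsq], fun h => by rw [h, rsq_ssq]⟩
  have hle : Rsq P ≤ Q / Ub ↔ P ≤ Ssq (Q / Ub) := by
    have := ssq_strictMono.le_iff_le (a := Rsq P) (b := Q / Ub)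
    rw [ssq_rsq] at this
    exact this.symm
  have e1 : (0 ≤ Q - Ub * Rsq P) ↔ P ≤ Ssq (Q / Ub) := by
    rw [sub_nonneg, ← hle, le_div_iff₀ hUb, mul_comm]
  have e2 : (Q - Ub * Rsq P = 0) ↔ P = Ssq (Q / Ub) := by
    constructor
    · intro h
      rw [← hR]
      field_simp
      linarith
    · intro h
      have := hR.mpr h
      field_simp at this
      linarith
  rw [← min_assoc]
  unfold normalConeIic
  split_ifs with h1 h2
  · simp only [Set.mem_Ici]
    rw [e1]
    constructor
    · intro h
      rw [h1]
      exact (min_eq_left (h1 ▸ h)).symm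
    · intro h
      rw [h]
      exact min_le_right _ _
  · simp only [Set.mem_singleton_iff]
    rw [e2]
    constructor
    · intro h
      subst h
      exact (min_eq_right h2.le).symm
    · intro h
      rcases le_total (Ssq (Q / Ub)) (min Pc PM) with hc|hc
      · rwa [min_eq_right hc] at h
      · rw [min_eq_left hc] at h
        exact absurd h h1
  · simp only [Set.mem_empty_iff_false, false_iff]
    intro h
    exact h1 (le_antisymm (h ▸ min_le_left _ _) (not_lt.mp h2))
end

section
/- Let β > 0, f̄ ∈ ℝ, and let Γ₊, Γ₋ : ℝ → ℝ be continuous nonincreasing functions with Γ₊(v) ≤ Γ₋(v) for all v and Γ₊(0) ≤ Γ₋(0). Define Γ(v) = gsgn(Γ₋(v), v, Γ₊(v)). If v* is the unique solution of βv + f̄ ∈ Γ(v), then: v* = 0 if and only if Γ₊(0) ≤ f̄ ≤ Γ₋(0); v* > 0 if and only if f̄ < Γ₊(0); and v* < 0 if and only if f̄ > Γ₋(0). -/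
open Set

theorem stmt_18 (β fb : ℝ) (hβ : 0 < β) (Γp Γm : ℝ → ℝ)
    (hΓpc : Continuous Γp) (hΓmc : Continuous Γm)
    (hΓp : Antitone Γp) (hΓm : Antitone Γm)
    (hle : ∀ v : ℝ, Γp v ≤ Γm v) (h0 : Γp 0 ≤ Γm 0)
    (vstar : ℝ) (hsol : β * vstar + fb ∈ gsgn (Γm vstar) vstar (Γp vstar))
    (huniq : ∀ w : ℝ, β * w + fb ∈ gsgn (Γm w) w (Γp w) → w = vstar) :
    (vstar = 0 ↔ Γp 0 ≤ fb ∧ fb ≤ Γm 0) ∧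
    (0 < vstar ↔ fb < Γp 0) ∧
    (vstar < 0 ↔ Γm 0 < fb) := by
  have h1 : vstar = 0 → Γp 0 ≤ fb ∧ fb ≤ Γm 0 := by
    intro h; subst h
    simp [gsgn, min_eq_right (hle 0), max_eq_left (hle 0)] at hsol
    exact hsol
  have h2 : 0 < vstar → fb < Γp 0 := by
    intro h
    simp [gsgn, h] at hsol
    have := hΓp h.le
    nlinarith
  have h3 : vstar < 0 → Γm 0 < fb := by
    intro h
    simp [gsgn, h, not_lt.mpr h.le, asymm h] at hsol
    have := hΓm h.le
    nlinarith
  rcases lt_trichotomy vstar 0 with h | h | h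
  · have := h3 h
    refine ⟨⟨fun he => absurd he h.ne, fun ⟨_, hb⟩ => by linarith⟩, ?_, ?_⟩
    · exact ⟨fun h' => absurd h' (not_lt.mpr h.le), fun h' => by linarith⟩
    · exact ⟨fun _ => this, fun _ => h⟩
  · have := h1 h
    exact ⟨⟨fun _ => this, fun _ => h⟩,
      ⟨fun h' => absurd (h ▸ h') (lt_irrefl 0), fun h' => absurd h' (not_lt.mpr this.1)⟩,
      ⟨fun h' => absurd (h ▸ h') (lt_irrefl 0), fun h' => absurd h' (not_lt.mpr this.2)⟩⟩
  · have := h2 h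
    exact ⟨⟨fun he => absurd he h.ne', fun ⟨ha, _⟩ => absurd this (not_lt.mpr ha)⟩,
      ⟨fun _ => this, fun _ => h⟩,
      ⟨fun h' => absurd h' (not_lt.mpr h.le), fun h' => by linarith⟩⟩
end
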